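/- Let π : S → T be an idempotent-separating epimorphism of inverse semigroups and ρ an order-preserving transversal of π that respects idempotents. Then for all e ∈ E(T), x ∈ T and ε ∈ {−1, 1}: ρ(x)^ε ρ(e) = ρ(x^ε e x^{−ε}) ρ(x)^ε. -/

import Mathlib

/-- An inverse semigroup: every element `s` has a (unique) inverse `s⁻¹`
with `s * s⁻¹ * s = s` and `s⁻¹ * s * s⁻¹ = s⁻¹`. -/
class InverseSemigroup (S : Type*) extends Semigroup S, Inv S where
  mul_inv_mul : ∀ s : S, s * s⁻¹ * s = s
  inv_mul_inv : ∀ s : S, s⁻¹ * s * s⁻¹ = s⁻¹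
  inv_unique : ∀ s t : S, s * t * s = s → t * s * t = t → t = s⁻¹

namespace InverseSemigroup

/-- The set of idempotents of a multiplicative structure. -/
def E (S : Type*) [Mul S] : Set S := {e | e * e = e}

/-- The natural partial order: `s ≤ t` iff `s = s * s⁻¹ * t`. -/
def nle {S : Type*} [Mul S] [Inv S] (s t : S) : Prop := s = s * s⁻¹ * t

/-- `r s = s * s⁻¹`. -/
def r {S : Type*} [Mul S] [Inv S] (s : S) : S := s * s⁻¹

/-- A Clifford semigroup (semilattice of groups): idempotents are central. -/
def IsClifford (S : Type*) [Mul S] : Prop := ∀ e ∈ E S, ∀ s : S, e * s = s * e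

end InverseSemigroup

open InverseSemigroup

/-!
An idempotent-separating homomorphism is injective on every principal order ideal `{s | s ≤ a}`,
since `s ≤ a` means `s = (s s⁻¹) a` and `s s⁻¹` is an idempotent. Both `ρ(x)^ε ρ(e)` and
`ρ(x^ε e x^{-ε}) ρ(x)^ε` lie below `ρ(x)^ε` and have the same image `x^ε e`, so they are equal.
-/

namespace InverseSemigroup

variable {S T : Type*} [InverseSemigroup S] [InverseSemigroup T]

theorem mem_E {e : S} : e ∈ E S ↔ e * e = e := Iff.rfl

theorem mul_mul_self_of_mem_E {e : S} (he : e ∈ E S) (t : S) : e * (e * t) = e * t := by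
  rw [← mul_assoc, he]

theorem inv_inv (s : S) : s⁻¹⁻¹ = s :=
  (inv_unique s⁻¹ s (inv_mul_inv s) (mul_inv_mul s)).symm

theorem inv_eq_self_of_mem_E {e : S} (he : e ∈ E S) : e⁻¹ = e :=
  (inv_unique e e (by rw [he, he]) (by rw [he, he])).symm

theorem r_mem_E (s : S) : r s ∈ E S := by
  rw [mem_E, r, ← mul_assoc, mul_inv_mul]

theorem inv_mul_self_mem_E (s : S) : s⁻¹ * s ∈ E S := by
  simpa only [r, inv_inv] using r_mem_E s⁻¹

theorem mul_mem_E {e f : S} (he : e ∈ E S) (hf : f ∈ E S) : e * f ∈ E S := by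
  set x := (e * f)⁻¹ with hx
  -- `f x e` is an inverse of `e f`, hence equal to `x`; this makes `x` idempotent.
  have hfxe : f * x * e = x := by
    refine inv_unique (e * f) (f * x * e) ?_ ?_
    · simpa only [mul_assoc, mul_mul_self_of_mem_E he, mul_mul_self_of_mem_E hf] using
        mul_inv_mul (e * f)
    · have h := congrArg (fun y => f * y * e) (inv_mul_inv (e * f))
      simpa only [mul_assoc, mul_mul_self_of_mem_E he, mul_mul_self_of_mem_E hf] using h
  have hxE : x ∈ E S := by
    calc x * x = f * (x * (e * f) * x) * e := by
          conv_lhs => rw [← hfxe]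
          simp only [mul_assoc]
      _ = x := by rw [inv_mul_inv, hfxe]
  rw [← inv_inv (e * f), ← hx, inv_eq_self_of_mem_E hxE]
  exact hxE

theorem mul_comm_of_mem_E {e f : S} (he : e ∈ E S) (hf : f ∈ E S) : e * f = f * e := by
  have hef := mul_mem_E he hf
  have hfe := mul_mem_E hf he
  have h : f * e = (e * f)⁻¹ := by
    refine inv_unique (e * f) (f * e) ?_ ?_
    · simpa only [mul_assoc, mul_mul_self_of_mem_E he, mul_mul_self_of_mem_E hf] using mem_E.mp hef
    · simpa only [mul_assoc, mul_mul_self_of_mem_E he, mul_mul_self_of_mem_E hf] using mem_E.mp hfe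
  rw [h, inv_eq_self_of_mem_E hef]

theorem mul_inv_rev (a b : S) : (a * b)⁻¹ = b⁻¹ * a⁻¹ := by
  have hcomm := mul_comm_of_mem_E (r_mem_E b) (inv_mul_self_mem_E a)
  refine (inv_unique (a * b) (b⁻¹ * a⁻¹) ?_ ?_).symm
  · calc a * b * (b⁻¹ * a⁻¹) * (a * b) = a * (r b * (a⁻¹ * a)) * b := by
          simp only [r, mul_assoc]
      _ = (a * a⁻¹ * a) * (b * b⁻¹ * b) := by rw [hcomm]; simp only [r, mul_assoc]
      _ = a * b := by rw [mul_inv_mul, mul_inv_mul]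
  · calc b⁻¹ * a⁻¹ * (a * b) * (b⁻¹ * a⁻¹) = b⁻¹ * ((a⁻¹ * a) * r b) * a⁻¹ := by
          simp only [r, mul_assoc]
      _ = (b⁻¹ * b * b⁻¹) * (a⁻¹ * a * a⁻¹) := by rw [← hcomm]; simp only [r, mul_assoc]
      _ = b⁻¹ * a⁻¹ := by rw [inv_mul_inv, inv_mul_inv]

theorem conj_mul_self {e : S} (he : e ∈ E S) (x : S) : x * e * x⁻¹ * x = x * e := by
  rw [mul_assoc (x * e), mul_assoc x, mul_comm_of_mem_E he (inv_mul_self_mem_E x),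
    ← mul_assoc, ← mul_assoc, mul_inv_mul]

theorem conj_mem_E {e : S} (he : e ∈ E S) (x : S) : x * e * x⁻¹ ∈ E S := by
  rw [mem_E, ← mul_assoc, ← mul_assoc, conj_mul_self he, mul_assoc x, he]

theorem mul_nle_of_mem_E_right {k : S} (hk : k ∈ E S) (a : S) : nle (a * k) a := by
  rw [nle, mul_inv_rev, inv_eq_self_of_mem_E hk]
  calc a * k = a * (a⁻¹ * a) * k := by rw [← mul_assoc, mul_inv_mul]
    _ = a * k * (k * a⁻¹) * a := by
        rw [mul_assoc a, mul_comm_of_mem_E (inv_mul_self_mem_E a) hk]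
        simp only [mul_assoc, mul_mul_self_of_mem_E hk]

theorem mul_nle_of_mem_E_left {g : S} (hg : g ∈ E S) (a : S) : nle (g * a) a := by
  rw [nle, mul_inv_rev, inv_eq_self_of_mem_E hg]
  symm
  calc g * a * (a⁻¹ * g) * a = g * (r a * g) * a := by simp only [r, mul_assoc]
    _ = g * (g * r a) * a := by rw [mul_comm_of_mem_E (r_mem_E a) hg]
    _ = g * a := by rw [← mul_assoc g g, hg, r, mul_assoc, mul_inv_mul]

theorem map_inv (f : S →ₙ* T) (s : S) : f s⁻¹ = (f s)⁻¹ :=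
  inv_unique (f s) (f s⁻¹) (by rw [← map_mul, ← map_mul, mul_inv_mul])
    (by rw [← map_mul, ← map_mul, inv_mul_inv])

theorem map_r (f : S →ₙ* T) (s : S) : f (r s) = r (f s) := by
  rw [r, r, map_mul, map_inv]

theorem map_mem_E (f : S →ₙ* T) {e : S} (he : e ∈ E S) : f e ∈ E T := by
  rw [mem_E, ← map_mul, he]

theorem eq_of_nle_of_map_eq {f : S →ₙ* T} (hf : Set.InjOn f (E S)) {s t a : S}
    (hs : nle s a) (ht : nle t a) (h : f s = f t) : s = t := by
  have hr : r s = r t := hf (r_mem_E s) (r_mem_E t) (by rw [map_r, map_r, h])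
  calc s = r s * a := hs
    _ = r t * a := by rw [hr]
    _ = t := ht.symm

theorem mul_eq_conj_mul {f : S →ₙ* T} (hf : Set.InjOn f (E S)) {a k g : S}
    (hk : k ∈ E S) (hg : g ∈ E S) (hgk : f g = f a * f k * (f a)⁻¹) : a * k = g * a :=
  eq_of_nle_of_map_eq hf (mul_nle_of_mem_E_right hk a) (mul_nle_of_mem_E_left hg a) <| by
    rw [map_mul, map_mul, hgk, conj_mul_self (map_mem_E f hk)]

end InverseSemigroup

theorem transversal_conj_idempotent_general {S T : Type*} [InverseSemigroup S] [InverseSemigroup T]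
    (π : S → T) (hπ : ∀ a b : S, π (a * b) = π a * π b)
    (hsep : ∀ a ∈ E S, ∀ b ∈ E S, π a = π b → a = b)
    (ρ : T → S) (hρ : ∀ t : T, π (ρ t) = t)
    (hρE : ∀ e ∈ E T, ρ e ∈ E S) :
    ∀ e ∈ E T, ∀ x : T,
      ρ x * ρ e = ρ (x * e * x⁻¹) * ρ x ∧
      (ρ x)⁻¹ * ρ e = ρ (x⁻¹ * e * x) * (ρ x)⁻¹ := by
  intro e he x
  let f : S →ₙ* T := ⟨π, hπ⟩
  have conj : ∀ a : S, a * ρ e = ρ (f a * e * (f a)⁻¹) * a := fun a =>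
    mul_eq_conj_mul (f := f) (fun s hs t ht => hsep s hs t ht) (hρE e he)
      (hρE _ (conj_mem_E he _)) (by simp only [f, MulHom.coe_mk, hρ])
  have hfρ : f (ρ x) = x := hρ x
  constructor
  · simpa only [hfρ] using conj (ρ x)
  · simpa only [InverseSemigroup.map_inv, hfρ, InverseSemigroup.inv_inv] using conj (ρ x)⁻¹

/-- For an order-preserving, idempotent-respecting transversal `ρ` of an
idempotent-separating epimorphism, `ρ(x)^ε ρ(e) = ρ(x^ε e x^{-ε}) ρ(x)^ε` for
`ε ∈ {-1, 1}`. -/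
theorem transversal_conj_idempotent {S T : Type*} [InverseSemigroup S] [InverseSemigroup T]
    (π : S → T) (hπ : ∀ a b : S, π (a * b) = π a * π b)
    (hsurj : Function.Surjective π)
    (hsep : ∀ a ∈ E S, ∀ b ∈ E S, π a = π b → a = b)
    (ρ : T → S) (hρ : ∀ t : T, π (ρ t) = t)
    (hρE : ∀ e ∈ E T, ρ e ∈ E S)
    (hord : ∀ x y : T, nle x y → nle (ρ x) (ρ y)) :
    ∀ e ∈ E T, ∀ x : T,
      ρ x * ρ e = ρ (x * e * x⁻¹) * ρ x ∧
      (ρ x)⁻¹ * ρ e = ρ (x⁻¹ * e * x) * (ρ x)⁻¹ :=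
  transversal_conj_idempotent_general π hπ hsep ρ hρ hρE
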